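/- Let K ⊆ ℝ^k be a nontrivial pointed closed convex cone and U ∈ ℝ^{k×m} with (L − UA)(ℝ^n_+) ∩ (−K) = {0}. Then every efficient solution x̄ ∈ ℝ^n_+ of the problem of minimizing (L − UA)x over ℝ^n_+ with respect to K satisfies (L − UA)x̄ = v for some v with γᵀv = 0, where γ ∈ K*⁰ is a linear scalarization witness; in particular γᵀ((L − UA)x̄) = 0 and (L − UA)ᵀγ ∈ ℝ^n_+. -/

import Mathlib

/-!
Write `B = L - UA`. Efficiency of `x̄` together with the hypothesis on `U` implies that the
cone `D = B(ℝⁿ₊) - ℝ₊ • Bx̄` meets `-K` only in `0`. Being finitely generated, `D` is closed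
(conic Carathéodory). Since `K` is pointed, the convex hull of the unit sphere of `K` is a
compact convex set avoiding `0`, so Hahn–Banach separates its negative from `D` by some `γ`.
Then `γ` is strictly positive on `K \ {0}` and nonnegative on `D`; nonnegativity on the
generators of `D` is `Bᵀγ ≥ 0` together with `γ ⬝ Bx̄ ≤ 0`, and `x̄ ≥ 0` forces `γ ⬝ Bx̄ = 0`.
-/

open Set LinearMap
open scoped Finset

section ConvexHull
variable {E : Type*} [NormedAddCommGroup E] [NormedSpace ℝ E] [FiniteDimensional ℝ E]

/-- Carathéodory: `finrank + 1` points suffice; unused slots get weight zero. -/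
theorem convexHull_eq_image_stdSimplex {s : Set E} (hs : s.Nonempty) :
    convexHull ℝ s =
      (fun p : (Fin (Module.finrank ℝ E + 1) → ℝ) × (Fin (Module.finrank ℝ E + 1) → E) =>
        ∑ j, p.1 j • p.2 j) '' (stdSimplex ℝ _ ×ˢ univ.pi fun _ => s) := by
  refine subset_antisymm (fun x hx => ?_) ?_
  · obtain ⟨ι, _, z, w, hzs, hz, hw, hw1, rfl⟩ := eq_pos_convex_span_of_mem_convexHull hx
    obtain ⟨e⟩ : Nonempty (ι ↪ Fin (Module.finrank ℝ E + 1)) :=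
      Function.Embedding.nonempty_of_card_le <| by
        simpa using hz.card_le_finrank_succ.trans (Nat.succ_le_succ (Submodule.finrank_le _))
    obtain ⟨s₀, hs₀⟩ := hs
    have extend_off {j} (hj : j ∉ range e) : Function.extend e w (fun _ => 0) j = 0 ∧
        Function.extend e z (fun _ => s₀) j = s₀ :=
      have hj' : ¬∃ i, e i = j := by simpa using hj
      ⟨Function.extend_apply' _ _ _ hj', Function.extend_apply' _ _ _ hj'⟩
    refine ⟨(Function.extend e w fun _ => 0, Function.extend e z fun _ => s₀),
      ⟨⟨fun j => ?_, ?_⟩, fun j _ => ?_⟩, ?_⟩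
    · by_cases hj : j ∈ range e
      · obtain ⟨i, rfl⟩ := hj; simpa [e.injective.extend_apply] using (hw i).le
      · simp [(extend_off hj).1]
    · rw [← hw1]
      exact (Fintype.sum_of_injective e e.injective _ _ (fun j hj => (extend_off hj).1)
        fun i => (e.injective.extend_apply _ _ _).symm).symm
    · by_cases hj : j ∈ range e
      · obtain ⟨i, rfl⟩ := hj; simpa [e.injective.extend_apply] using hzs (mem_range_self i)
      · simpa [(extend_off hj).2] using hs₀
    · exact (Fintype.sum_of_injective e e.injective _ _ (fun j hj => by simp [(extend_off hj).1])
        fun i => by simp [e.injective.extend_apply]).symm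
  · rintro _ ⟨⟨w, z⟩, ⟨⟨hw, hw1⟩, hz⟩, rfl⟩
    exact (convex_convexHull ℝ s).sum_mem (fun j _ => hw j) hw1
      fun j _ => subset_convexHull ℝ s (hz j (mem_univ j))

theorem IsCompact.convexHull {s : Set E} (hs : IsCompact s) : IsCompact (convexHull ℝ s) := by
  rcases s.eq_empty_or_nonempty with rfl | hne
  · simp
  rw [convexHull_eq_image_stdSimplex hne]
  exact ((isCompact_stdSimplex ℝ _).prod (isCompact_univ_pi fun _ => hs)).image (by fun_prop)
end ConvexHull

section PointedCone

theorem convex_diff_zero_of_pointed {M : Type*} [AddCommGroup M] [Module ℝ M] {K : Set M}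
    (hKcone : ∀ c : ℝ, 0 ≤ c → ∀ x ∈ K, c • x ∈ K)
    (hKconvex : Convex ℝ K) (hKpointed : K ∩ -K = {0}) : Convex ℝ (K \ {0}) := by
  rintro x ⟨hx, hx0⟩ y ⟨hy, hy0⟩ a b ha hb hab
  refine ⟨hKconvex hx hy ha hb hab, fun hxy => ?_⟩
  rw [mem_singleton_iff] at hxy
  have hax : a • x = 0 := by
    have hneg : -(a • x) = b • y := neg_eq_of_add_eq_zero_right hxy
    exact (Set.ext_iff.mp hKpointed _).mp ⟨hKcone a ha x hx, by
      rw [Set.mem_neg, hneg]; exact hKcone b hb y hy⟩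
  have hby : b • y = 0 := by rwa [hax, zero_add] at hxy
  rw [smul_eq_zero] at hax hby
  rcases hax with rfl | rfl
  · rcases hby with rfl | rfl
    · norm_num at hab
    · exact hy0 rfl
  · exact hx0 rfl

variable {E : Type*} [NormedAddCommGroup E] [NormedSpace ℝ E] {K : Set E}

theorem exists_strictlyPositive_of_inter_neg_subset [FiniteDimensional ℝ E]
    (hKcone : ∀ c : ℝ, 0 ≤ c → ∀ x ∈ K, c • x ∈ K) (hKclosed : IsClosed K)
    (hKconvex : Convex ℝ K) (hKpointed : K ∩ -K = {0})
    (D : ProperCone ℝ E) (hD : (D : Set E) ∩ -K ⊆ {0}) :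
    ∃ f : StrongDual ℝ E, (∀ x ∈ D, 0 ≤ f x) ∧ ∀ u ∈ K, u ≠ 0 → 0 < f u := by
  set S := -(K ∩ Metric.sphere 0 1) with hSdef
  have hS : IsCompact (convexHull ℝ S) :=
    ((isCompact_sphere 0 1).inter_left hKclosed).neg.convexHull
  have hSK : convexHull ℝ S ⊆ -(K \ {0}) :=
    convexHull_min
      (fun x hx => ⟨hx.1, fun h => by rw [mem_singleton_iff] at h; simpa [h] using hx.2⟩)
      (convex_diff_zero_of_pointed hKcone hKconvex hKpointed).neg
  obtain ⟨f, hfD, hfS⟩ := D.hyperplane_separation (convex_convexHull ℝ S) hS <|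
    Set.disjoint_left.2 fun x hxS hxD => (hSK hxS).2 <| by
      simpa using hD ⟨hxD, (hSK hxS).1⟩
  refine ⟨f, hfD, fun u hu hu0 => ?_⟩
  have hunit : -(‖u‖⁻¹ • u) ∈ convexHull ℝ S :=
    subset_convexHull ℝ S <| by
      rw [hSdef, Set.neg_mem_neg]
      exact ⟨hKcone ‖u‖⁻¹ (by positivity) u hu, by simp [norm_smul, hu0]⟩
  have := hfS _ hunit
  rw [map_neg, map_smul, smul_eq_mul, neg_lt_zero] at this
  exact pos_of_mul_pos_right this (by positivity)
end PointedCone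

section FinitelyGeneratedCone
variable {ι E : Type*}

def Submodule.vanishingOn (t : Set ι) : Submodule ℝ (ι → ℝ) := Submodule.pi t fun _ => ⊥

theorem Submodule.mem_vanishingOn {t : Set ι} {x : ι → ℝ} :
    x ∈ Submodule.vanishingOn t ↔ ∀ i ∈ t, x i = 0 := by
  simp [Submodule.vanishingOn]

variable [Fintype ι] [NormedAddCommGroup E] [NormedSpace ℝ E]

theorem exists_sub_smul_nonneg_eq_zero {c d : ι → ℝ} (hc : 0 ≤ c) (hd : ∃ i, 0 < d i) :
    ∃ ρ : ℝ, 0 ≤ c - ρ • d ∧ ∃ j, 0 < d j ∧ (c - ρ • d) j = 0 := by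
  obtain ⟨j, hj, hmin⟩ := Finset.exists_min_image {i | 0 < d i} (fun i => c i / d i) <| by
    simpa [Finset.Nonempty] using hd
  rw [Finset.mem_filter_univ] at hj
  refine ⟨c j / d j, fun i => ?_, j, hj, by simp [hj.ne']⟩
  simp only [Pi.zero_apply, Pi.sub_apply, Pi.smul_apply, smul_eq_mul, sub_nonneg]
  by_cases hi : 0 < d i
  · calc c j / d j * d i ≤ c i / d i * d i :=
          mul_le_mul_of_nonneg_right (hmin i ((Finset.mem_filter_univ _).2 hi)) hi.le
      _ = c i := div_mul_cancel₀ _ hi.ne'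
  · exact (mul_nonpos_of_nonneg_of_nonpos (div_nonneg (hc j) hj.le) (not_lt.1 hi)).trans (hc i)

/-- Carathéodory's theorem for cones: the generators carrying positive weight can be taken
linearly independent. -/
theorem exists_nonneg_eq_and_disjoint_ker {M : Type*} [AddCommGroup M] [Module ℝ M]
    (f : (ι → ℝ) →ₗ[ℝ] M) {c : ι → ℝ} (hc : 0 ≤ c) :
    ∃ c' : ι → ℝ, 0 ≤ c' ∧ f c' = f c ∧
      Disjoint (Submodule.vanishingOn {i | c' i = 0}) (ker f) := by
  induction hn : #{i | c i ≠ 0} using Nat.strong_induction_on generalizing c with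
  | _ n ih =>
  by_cases hdis : Disjoint (Submodule.vanishingOn {i | c i = 0}) (ker f)
  · exact ⟨c, hc, rfl, hdis⟩
  obtain ⟨d, hdV, hdker, i, hi⟩ : ∃ d ∈ Submodule.vanishingOn {i | c i = 0},
      f d = 0 ∧ ∃ i, 0 < d i := by
    obtain ⟨d, hdV, hdker, hd0⟩ := by simpa [Submodule.disjoint_def] using hdis
    obtain ⟨i, hi⟩ := Function.ne_iff.mp hd0
    rcases hi.lt_or_gt with h | h
    · exact ⟨-d, neg_mem hdV, by simp [hdker], i, by simpa using h⟩
    · exact ⟨d, hdV, hdker, i, h⟩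
  simp only [Submodule.mem_vanishingOn] at hdV
  obtain ⟨ρ, hρ, j, hj, hρj⟩ := exists_sub_smul_nonneg_eq_zero hc ⟨i, hi⟩
  have hsupp : #{i | (c - ρ • d) i ≠ 0} < n := by
    rw [← hn]
    refine Finset.card_lt_card <| Finset.ssubset_iff_of_subset (fun i => ?_) |>.2
      ⟨j, ?_, ?_⟩
    · simp only [Finset.mem_filter_univ]
      intro h hc0
      simp [hc0, hdV i hc0] at h
    · simpa using fun hc0 => hj.ne' (hdV j hc0)
    · simpa using hρj
  obtain ⟨c', hc', hfc', hdis'⟩ := ih _ hsupp hρ rfl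
  exact ⟨c', hc', by simp [hfc', hdker], hdis'⟩

theorem isClosed_image_inter_of_disjoint_ker {F : Type*} [NormedAddCommGroup F] [NormedSpace ℝ F]
    [FiniteDimensional ℝ F] (f : F →ₗ[ℝ] E) {V : Submodule ℝ F} (hV : Disjoint V (ker f))
    {s : Set F} (hs : IsClosed s) : IsClosed (f '' (s ∩ V)) := by
  have himage : f '' (s ∩ V) = f.domRestrict V '' (V.subtype ⁻¹' s) := by
    ext y
    constructor
    · rintro ⟨x, ⟨hxs, hxV⟩, rfl⟩
      exact ⟨⟨x, hxV⟩, hxs, rfl⟩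
    · rintro ⟨⟨x, hxV⟩, hxs, rfl⟩
      exact ⟨x, ⟨hxs, hxV⟩, rfl⟩
  rw [himage]
  refine (isClosedEmbedding_of_injective ?_).isClosedMap _ (hs.preimage continuous_subtype_val)
  rwa [ker_domRestrict, ← Submodule.disjoint_iff_comap_eq_bot]

theorem isClosed_image_nonneg (f : (ι → ℝ) →ₗ[ℝ] E) : IsClosed (f '' {c | 0 ≤ c}) := by
  have hunion : f '' {c | 0 ≤ c} =
      ⋃ t : {t : Set ι // Disjoint (Submodule.vanishingOn t) (ker f)},
        f '' ({c | 0 ≤ c} ∩ Submodule.vanishingOn t.1) := by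
    refine subset_antisymm ?_ (iUnion_subset fun t => image_mono inter_subset_left)
    rintro _ ⟨c, hc, rfl⟩
    obtain ⟨c', hc', hfc', hdis⟩ := exists_nonneg_eq_and_disjoint_ker f hc
    exact mem_iUnion.2
      ⟨⟨_, hdis⟩, c', ⟨hc', Submodule.mem_vanishingOn.2 fun i hi => hi⟩, hfc'⟩
  rw [hunion]
  exact isClosed_iUnion_of_finite fun t =>
    isClosed_image_inter_of_disjoint_ker f t.2 (isClosed_le continuous_const continuous_id)

def ProperCone.imageNonneg (f : (ι → ℝ) →ₗ[ℝ] E) : ProperCone ℝ E where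
  toSubmodule := (PointedCone.positive ℝ (ι → ℝ)).map f
  isClosed' := isClosed_image_nonneg f

theorem ProperCone.mem_imageNonneg {f : (ι → ℝ) →ₗ[ℝ] E} {x : E} :
    x ∈ ProperCone.imageNonneg f ↔ ∃ c, 0 ≤ c ∧ f c = x := Iff.rfl

end FinitelyGeneratedCone

section Efficiency
variable {ι E : Type*} [NormedAddCommGroup E] [NormedSpace ℝ E]

/-- On the nonnegative orthant this map sweeps out the cone `B(ℝ^ι₊) - ℝ₊ • y`. -/
def LinearMap.subRay (B : (ι → ℝ) →ₗ[ℝ] E) (y : E) : (Option ι → ℝ) →ₗ[ℝ] E :=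
  B ∘ₗ funLeft ℝ ℝ some - (proj none).smulRight y

theorem LinearMap.subRay_apply (B : (ι → ℝ) →ₗ[ℝ] E) (y : E) (c : Option ι → ℝ) :
    B.subRay y c = B (fun i => c (some i)) - c none • y := rfl

variable [Fintype ι] {K : Set E} {B : (ι → ℝ) →ₗ[ℝ] E} {xbar : ι → ℝ}

theorem imageNonneg_subRay_inter_neg_subset
    (hKcone : ∀ c : ℝ, 0 ≤ c → ∀ x ∈ K, c • x ∈ K)
    (hU : B '' {x | 0 ≤ x} ∩ -K ⊆ {0})
    (heff : ∀ x, 0 ≤ x → B xbar - B x ∈ K → B xbar - B x = 0) :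
    (ProperCone.imageNonneg (B.subRay (B xbar)) : Set E) ∩ -K ⊆ {0} := by
  rintro _ ⟨hmem, hK⟩
  obtain ⟨c, hc, rfl⟩ := ProperCone.mem_imageNonneg.1 hmem
  rw [mem_singleton_iff, subRay_apply]
  rw [subRay_apply] at hK
  set x : ι → ℝ := fun i => c (some i)
  have hx : 0 ≤ x := fun i => hc (some i)
  have ht : 0 ≤ c none := hc none
  set t := c none
  rcases ht.eq_or_lt with h0 | hpos
  · rw [← h0, zero_smul, sub_zero] at hK ⊢
    exact hU ⟨⟨x, hx, rfl⟩, hK⟩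
  · have hdiff : B xbar - B (t⁻¹ • x) = -t⁻¹ • (B x - t • B xbar) := by
      rw [map_smul, smul_sub, smul_smul, neg_mul, inv_mul_cancel₀ hpos.ne', neg_smul, neg_smul,
        one_smul, sub_neg_eq_add, neg_add_eq_sub]
    have := heff _ (smul_nonneg (inv_nonneg.2 hpos.le) hx) <| by
      rw [hdiff, neg_smul, ← smul_neg]
      exact hKcone _ (inv_nonneg.2 hpos.le) _ hK
    rw [hdiff, smul_eq_zero, neg_eq_zero, inv_eq_zero] at this
    exact this.resolve_left hpos.ne'

theorem exists_strictlyPositive_of_efficient [FiniteDimensional ℝ E]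
    (hKcone : ∀ c : ℝ, 0 ≤ c → ∀ x ∈ K, c • x ∈ K) (hKclosed : IsClosed K)
    (hKconvex : Convex ℝ K) (hKpointed : K ∩ -K = {0}) (hxbar : 0 ≤ xbar)
    (hU : B '' {x | 0 ≤ x} ∩ -K ⊆ {0})
    (heff : ∀ x, 0 ≤ x → B xbar - B x ∈ K → B xbar - B x = 0) :
    ∃ f : StrongDual ℝ E,
      (∀ u ∈ K, u ≠ 0 → 0 < f u) ∧ (∀ x, 0 ≤ x → 0 ≤ f (B x)) ∧ f (B xbar) = 0 := by
  obtain ⟨f, hfD, hfK⟩ := exists_strictlyPositive_of_inter_neg_subset hKcone hKclosed hKconvex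
    hKpointed _ (imageNonneg_subRay_inter_neg_subset hKcone hU heff)
  have hfB : ∀ x, 0 ≤ x → 0 ≤ f (B x) := fun x hx => by
    simpa [subRay_apply] using
      hfD _ ⟨fun o => o.elim 0 x, Option.forall.2 ⟨le_rfl, hx⟩, rfl⟩
  have hfxbar : f (B xbar) ≤ 0 := by
    simpa [subRay_apply, ← Pi.zero_def] using
      hfD _ ⟨fun o => o.elim 1 0, Option.forall.2 ⟨zero_le_one, fun _ => le_rfl⟩, rfl⟩
  exact ⟨f, hfK, hfB, hfxbar.antisymm (hfB xbar hxbar)⟩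

end Efficiency

open Matrix

theorem stmt19_general (k n m : ℕ) (K : Set (Fin k → ℝ))
    (hKcone : ∀ (c : ℝ), 0 ≤ c → ∀ x ∈ K, c • x ∈ K)
    (hKclosed : IsClosed K) (hKconvex : Convex ℝ K)
    (hKpointed : K ∩ (-K) = {0})
    (L : Matrix (Fin k) (Fin n) ℝ) (A : Matrix (Fin m) (Fin n) ℝ)
    (U : Matrix (Fin k) (Fin m) ℝ)
    (hU : {w : Fin k → ℝ | ∃ x : Fin n → ℝ, (∀ i, 0 ≤ x i) ∧ (L - U * A) *ᵥ x = w}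
      ∩ (-K) = {0})
    (xbar : Fin n → ℝ) (hxbar : ∀ i, 0 ≤ xbar i)
    (heff : ¬ ∃ x : Fin n → ℝ, (∀ i, 0 ≤ x i) ∧
      (L - U * A) *ᵥ xbar - (L - U * A) *ᵥ x ∈ K ∧
      (L - U * A) *ᵥ xbar - (L - U * A) *ᵥ x ≠ 0) :
    ∃ (γ : Fin k → ℝ) (v : Fin k → ℝ),
      (∀ u ∈ K, u ≠ 0 → 0 < γ ⬝ᵥ u) ∧
      (∀ x : Fin n → ℝ, (∀ i, 0 ≤ x i) →
        γ ⬝ᵥ ((L - U * A) *ᵥ xbar) ≤ γ ⬝ᵥ ((L - U * A) *ᵥ x)) ∧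
      (L - U * A) *ᵥ xbar = v ∧ γ ⬝ᵥ v = 0 ∧
      ∀ i, 0 ≤ ((L - U * A)ᵀ *ᵥ γ) i := by
  obtain ⟨f, hfK, hfB, hfxbar⟩ :=
    exists_strictlyPositive_of_efficient (B := (L - U * A).mulVecLin) hKcone hKclosed hKconvex
      hKpointed hxbar hU.subset fun x hx hK => by_contra fun hne => heff ⟨x, hx, hK, hne⟩
  set γ := (dotProductEquiv ℝ (Fin k)).symm f.toLinearMap
  have hγ (x : Fin k → ℝ) : γ ⬝ᵥ x = f x := by
    rw [← dotProductEquiv_apply_apply, LinearEquiv.apply_symm_apply]; rfl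
  refine ⟨γ, _, fun u hu hu0 => (hγ u).symm ▸ hfK u hu hu0, fun x hx => ?_, rfl, ?_,
    fun i => ?_⟩
  · rw [hγ, hγ]
    exact hfxbar.le.trans (hfB x hx)
  · rw [hγ]
    exact hfxbar
  · rw [mulVec_transpose, ← dotProduct_single_one (γ ᵥ* _) i, ← dotProduct_mulVec, hγ]
    exact hfB _ (Pi.single_nonneg.2 zero_le_one)

theorem stmt19 (k n m : ℕ) (K : Set (Fin k → ℝ))
    (hKcone : ∀ (c : ℝ), 0 ≤ c → ∀ x ∈ K, c • x ∈ K)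
    (hKclosed : IsClosed K) (hKconvex : Convex ℝ K)
    (hKpointed : K ∩ (-K) = {0})
    (hKne : K ≠ {0}) (hKuniv : K ≠ Set.univ)
    (L : Matrix (Fin k) (Fin n) ℝ) (A : Matrix (Fin m) (Fin n) ℝ)
    (U : Matrix (Fin k) (Fin m) ℝ)
    (hU : {w : Fin k → ℝ | ∃ x : Fin n → ℝ, (∀ i, 0 ≤ x i) ∧ (L - U * A) *ᵥ x = w}
      ∩ (-K) = {0})
    (xbar : Fin n → ℝ) (hxbar : ∀ i, 0 ≤ xbar i)
    (heff : ¬ ∃ x : Fin n → ℝ, (∀ i, 0 ≤ x i) ∧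
      (L - U * A) *ᵥ xbar - (L - U * A) *ᵥ x ∈ K ∧
      (L - U * A) *ᵥ xbar - (L - U * A) *ᵥ x ≠ 0) :
    ∃ (γ : Fin k → ℝ) (v : Fin k → ℝ),
      (∀ u ∈ K, u ≠ 0 → 0 < γ ⬝ᵥ u) ∧
      (∀ x : Fin n → ℝ, (∀ i, 0 ≤ x i) →
        γ ⬝ᵥ ((L - U * A) *ᵥ xbar) ≤ γ ⬝ᵥ ((L - U * A) *ᵥ x)) ∧
      (L - U * A) *ᵥ xbar = v ∧ γ ⬝ᵥ v = 0 ∧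
      ∀ i, 0 ≤ ((L - U * A)ᵀ *ᵥ γ) i :=
  stmt19_general k n m K hKcone hKclosed hKconvex hKpointed L A U hU xbar hxbar heff
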